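/- If Δ is Buchsbaum and its contraction Γ is pure, then Γ is Buchsbaum. -/

import Mathlib

open Finset

/-- An abstract simplicial complex on vertex type `V`: a downward closed
family of finite subsets of `V`. -/
structure AbstractComplex (V : Type*) where
  faces : Set (Finset V)
  down_closed : ∀ {s t : Finset V}, s ∈ faces → t ⊆ s → t ∈ faces

namespace AbstractComplex

variable {V : Type*}

/-- A facet is a maximal face. -/
def IsFacet (Δ : AbstractComplex V) (s : Finset V) : Prop :=
  s ∈ Δ.faces ∧ ∀ t ∈ Δ.faces, s ⊆ t → s = t

/-- A complex is pure if all facets have the same cardinality. -/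
def IsPure (Δ : AbstractComplex V) : Prop :=
  ∀ s t : Finset V, Δ.IsFacet s → Δ.IsFacet t → s.card = t.card

/-- The link of a (potential) face `F`. -/
def link [DecidableEq V] (Δ : AbstractComplex V) (F : Finset V) : AbstractComplex V where
  faces := {G | G ∩ F = ∅ ∧ G ∪ F ∈ Δ.faces}
  down_closed := by
    rintro s t ⟨h1, h2⟩ hts
    refine ⟨subset_empty.mp ?_, Δ.down_closed h2 (union_subset_union hts subset_rfl)⟩
    exact h1 ▸ inter_subset_inter hts subset_rfl

/-- The faces of cardinality `q` (i.e. dimension `q - 1`). -/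
abbrev Face (Δ : AbstractComplex V) (q : ℕ) := {s : Finset V // s ∈ Δ.faces ∧ s.card = q}

/-- The simplicial boundary map on reduced chains with coefficients in `K`,
from chains spanned by faces of cardinality `q+1` to those spanned by faces of
cardinality `q`. -/
noncomputable def boundary (K : Type*) [Field K] [LinearOrder V]
    (Δ : AbstractComplex V) (q : ℕ) :
    (Δ.Face (q + 1) →₀ K) →ₗ[K] (Δ.Face q →₀ K) :=
  Finsupp.lsum K fun s => LinearMap.toSpanSingleton K _
    (∑ x ∈ s.1.attach,
      ((-1 : K) ^ (s.1.filter (fun y => y < x.1)).card) •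
        Finsupp.single (⟨s.1.erase x.1,
          Δ.down_closed s.2.1 (erase_subset _ _), by
            rw [card_erase_of_mem x.2, s.2.2]; omega⟩ : Δ.Face q) (1 : K))

/-- `Δ.RHTriv K i` says that the `i`-th reduced simplicial homology of `Δ`
with coefficients in `K` vanishes. -/
def RHTriv (K : Type*) [Field K] [LinearOrder V] (Δ : AbstractComplex V) : ℤ → Prop
  | Int.ofNat i =>
      LinearMap.ker (Δ.boundary K i) ≤ LinearMap.range (Δ.boundary K (i + 1))
  | Int.negSucc 0 => ⊤ ≤ LinearMap.range (Δ.boundary K 0)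
  | Int.negSucc (_ + 1) => True

/-- `Δ.dimLT i` means `i < dim Δ`. -/
def dimLT (Δ : AbstractComplex V) (i : ℤ) : Prop :=
  ∃ s ∈ Δ.faces, i + 2 ≤ (s.card : ℤ)

/-- Cohen–Macaulayness over `K`, via Reisner's criterion. -/
def IsCM (K : Type*) [Field K] [LinearOrder V] (Δ : AbstractComplex V) : Prop :=
  ∀ F ∈ Δ.faces, ∀ i : ℤ, (Δ.link F).dimLT i → (Δ.link F).RHTriv K i

/-- `CM_t`: pure, and the link of every face of cardinality at least `t`
is Cohen–Macaulay. -/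
def IsCMt (K : Type*) [Field K] [LinearOrder V] (t : ℕ) (Δ : AbstractComplex V) : Prop :=
  Δ.IsPure ∧ ∀ F ∈ Δ.faces, t ≤ F.card → IsCM K (Δ.link F)

/-- Buchsbaum-ness: pure and the reduced homology of the link of every nonempty
face vanishes below its dimension. -/
def IsBuchsbaum (K : Type*) [Field K] [LinearOrder V] (Δ : AbstractComplex V) : Prop :=
  Δ.IsPure ∧ ∀ G ∈ Δ.faces, G ≠ ∅ →
    ∀ i : ℤ, (Δ.link G).dimLT i → (Δ.link G).RHTriv K i

end AbstractComplex

/-- The expansion `F^α` of a finite vertex set. -/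
def expandSet {V : Type*} (α : V → ℕ) (F : Finset V) : Finset (Σ i, Fin (α i)) :=
  F.sigma fun _ => Finset.univ

namespace AbstractComplex

/-- The expansion `Δ^α` of a simplicial complex: the complex generated by the
expansions of the facets of `Δ`. -/
def expand {V : Type*} (Δ : AbstractComplex V) (α : V → ℕ) :
    AbstractComplex (Σ i, Fin (α i)) where
  faces := {σ | ∃ F, Δ.IsFacet F ∧ σ ⊆ expandSet α F}
  down_closed := fun ⟨F, hF, hsub⟩ hts => ⟨F, hF, hts.trans hsub⟩

end AbstractComplex

/-- A linear order on the expanded vertex set (lexicographic). -/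
noncomputable instance sigmaFinLinearOrder {V : Type*} [LinearOrder V] {α : V → ℕ} :
    LinearOrder (Σ i, Fin (α i)) :=
  LinearOrder.lift' (toLex : (Σ i, Fin (α i)) → Σₗ i, Fin (α i)) toLex.injective

namespace AbstractComplex

variable {V : Type*}

/-- Two vertices are equivalent iff they lie in exactly the same facets. -/
def contractSetoid (Δ : AbstractComplex V) : Setoid V where
  r x y := ∀ F : Finset V, Δ.IsFacet F → (x ∈ F ↔ y ∈ F)
  iseqv := ⟨fun _ _ _ => Iff.rfl, fun h F hF => (h F hF).symm,
    fun h1 h2 F hF => (h1 F hF).trans (h2 F hF)⟩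

/-- The contraction of `Δ`: the complex on the equivalence classes of vertices,
whose facets are the images of the facets of `Δ`. -/
def contraction (Δ : AbstractComplex V) : AbstractComplex (Quotient Δ.contractSetoid) where
  faces := {σ | ∃ F : Finset V, Δ.IsFacet F ∧
    ∀ y ∈ σ, ∃ x ∈ F, Quotient.mk Δ.contractSetoid x = y}
  down_closed := fun ⟨F, hF, h⟩ hts => ⟨F, hF, fun y hy => h y (hts hy)⟩

/-- The size of an equivalence class of vertices: the components of the vector
obtained from contraction. -/
noncomputable def classSize (Δ : AbstractComplex V) (y : Quotient Δ.contractSetoid) : ℕ :=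
  Nat.card {x : V // Quotient.mk Δ.contractSetoid x = y}

end AbstractComplex

noncomputable instance quotLinearOrder {V : Type*} [LinearOrder V] {s : Setoid V} :
    LinearOrder (Quotient s) :=
  LinearOrder.lift' Quotient.out Quotient.out_injective

/-!
Choosing a representative of each vertex class embeds the link of a face `Ḡ` of the contraction
`Γ` into the link in `Δ` of the preimage `G` of `Ḡ`, and sending a vertex to its class maps that
link back onto the link of `Ḡ`. Both vertex maps are simplicial and the second undoes the first.
On reduced chains a simplicial map sends a simplex to its image, with the sign of the permutation
by which the map reorders its vertices, or to zero if two vertices collide; this commutes with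
the boundary. So the chain complex of the link of `Ḡ` is a retract of that of the link of `G`,
whose homology vanishes below its dimension, which is at least that of the link of `Ḡ`, because
`Δ` is Buchsbaum and `G` is nonempty.
-/

namespace Finset

section Image

variable {α β : Type*} [DecidableEq β] {f : α → β} {s : Finset α}

theorem image_erase_of_injOn [DecidableEq α] (hf : Set.InjOn f s) {x : α} (hx : x ∈ s) :
    (s.erase x).image f = (s.image f).erase (f x) := by
  simpa [sdiff_singleton_eq_erase] using image_sdiff_of_injOn hf (singleton_subset_iff.2 hx)

theorem image_erase_of_map_eq [DecidableEq α] {u v : α} (hu : u ∈ s) (huv : u ≠ v)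
    (hfuv : f u = f v) : (s.erase v).image f = s.image f := by
  refine (image_subset_image (erase_subset _ _)).antisymm fun w hw => ?_
  obtain ⟨y, hy, rfl⟩ := mem_image.1 hw
  rcases eq_or_ne y v with rfl | hyv
  · exact mem_image.2 ⟨u, mem_erase.2 ⟨huv, hu⟩, hfuv⟩
  · exact mem_image_of_mem f (mem_erase.2 ⟨hyv, hy⟩)

theorem card_image_lt_of_map_eq {u v : α} (hu : u ∈ s) (hv : v ∈ s) (huv : u ≠ v)
    (hfuv : f u = f v) : #(s.image f) < #s :=
  card_image_le.lt_of_ne fun h => huv (card_image_iff.1 h hu hv hfuv)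

end Image

section Inversions

variable {V W : Type*} [LinearOrder V] [LinearOrder W]

def inversions (f : V → W) (s : Finset V) : ℕ :=
  #{p ∈ s ×ˢ s | p.1 < p.2 ∧ f p.2 < f p.1}

theorem inversions_eq_sum (f : V → W) (s : Finset V) :
    inversions f s = ∑ a ∈ s, ∑ b ∈ s, if a < b ∧ f b < f a then 1 else 0 := by
  rw [inversions, card_filter, sum_product]

theorem inversions_eq_inversions_erase_add (f : V → W) {s : Finset V} {x : V} (hx : x ∈ s) :
    inversions f s = inversions f (s.erase x) + #{y ∈ s | y < x ∧ f x < f y}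
      + #{y ∈ s | x < y ∧ f y < f x} := by
  simp only [inversions_eq_sum, card_filter, ← add_sum_erase _ _ hx, lt_irrefl, false_and,
    if_false, zero_add, sum_add_distrib]
  ring

theorem inversions_eq_zero_of_monotoneOn {f : V → W} {s : Finset V} (hf : MonotoneOn f s) :
    inversions f s = 0 := by
  simp only [inversions, card_eq_zero, filter_eq_empty_iff, mem_product, not_and, not_lt]
  exact fun _ ⟨ha, hb⟩ hab => hf ha hb hab.le

theorem inversions_erase_mod_two_of_injOn {f : V → W} {s : Finset V} (hf : Set.InjOn f s)
    {x : V} (hx : x ∈ s) :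
    (inversions f s + #{w ∈ s.image f | w < f x}) % 2
      = (#{y ∈ s | y < x} + inversions f (s.erase x)) % 2 := by
  have himage : #{w ∈ s.image f | w < f x} = #{y ∈ s | f y < f x} := by
    rw [filter_image, card_image_of_injOn (hf.mono (filter_subset _ _))]
  have hsplit : #{y ∈ s | y < x} + #{y ∈ s | f y < f x}
      = 2 * #{y ∈ s | y < x ∧ f y < f x}
        + (#{y ∈ s | y < x ∧ f x < f y} + #{y ∈ s | x < y ∧ f y < f x}) := by
    simp only [card_filter, mul_sum, ← sum_add_distrib]
    refine sum_congr rfl fun y hy => ?_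
    rcases eq_or_ne y x with rfl | hyx
    · simp
    have hfyx : f y ≠ f x := fun h => hyx (hf hy hx h)
    rcases lt_or_gt_of_ne hyx with h1 | h1 <;> rcases lt_or_gt_of_ne hfyx with h2 | h2 <;> grind
  have := inversions_eq_inversions_erase_add f hx
  omega

theorem card_filter_lt_eq_of_lt {s : Finset V} {u v : V} (hu : u ∈ s) (huv : u < v) :
    #{y ∈ s | y < v} = #{y ∈ s | y < u} + #{y ∈ s | u < y ∧ y < v} + 1 := by
  have hone : #{y ∈ s | y = u} = 1 := by simp [filter_eq', hu]
  rw [← hone]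
  simp only [card_filter, ← sum_add_distrib]
  refine sum_congr rfl fun y _ => ?_
  rcases lt_trichotomy y u with h | rfl | h <;> grind

theorem inversions_erase_mod_two_of_collision {f : V → W} {s : Finset V} {u v : V}
    (hu : u ∈ s) (hv : v ∈ s) (huv : u < v) (hfuv : f u = f v)
    (hfib : ∀ y ∈ s, y ≠ u → y ≠ v → f y ≠ f u) :
    (#{y ∈ s | y < v} + inversions f (s.erase v)) % 2
      = (#{y ∈ s | y < u} + inversions f (s.erase u) + 1) % 2 := by
  have hfilter : ∀ {a : V} (p : V → Prop) [DecidablePred p], ¬ p a →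
      #{y ∈ s.erase a | p y} = #{y ∈ s | p y} := fun p _ hp => by
    rw [filter_erase, erase_eq_of_notMem (by simp [hp])]
  have hv' := inversions_eq_inversions_erase_add f (mem_erase.2 ⟨huv.ne', hv⟩)
  have hu' := inversions_eq_inversions_erase_add f (mem_erase.2 ⟨huv.ne, hu⟩)
  rw [erase_right_comm] at hu'
  rw [hfilter (fun y => y < v ∧ f v < f y) (by simp [← hfuv]),
    hfilter (fun y => v < y ∧ f y < f v) (by simp [huv.not_gt])] at hv'
  rw [hfilter (fun y => y < u ∧ f u < f y) (by simp [huv.not_gt]),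
    hfilter (fun y => u < y ∧ f y < f u) (by simp [hfuv])] at hu'
  have hbetween : Even (#{y ∈ s | y < v ∧ f v < f y} + #{y ∈ s | v < y ∧ f y < f v}
      + #{y ∈ s | y < u ∧ f u < f y} + #{y ∈ s | u < y ∧ f y < f u}
      + #{y ∈ s | u < y ∧ y < v}) := by
    simp only [card_filter, ← sum_add_distrib]
    refine even_sum _ fun y hy => ?_
    rcases eq_or_ne y u with rfl | hyu
    · simp [huv, hfuv]
    rcases eq_or_ne y v with rfl | hyv
    · simp [huv.not_gt, hfuv]
    -- `y` strictly between `u` and `v` is inverted with exactly one of them, since `f y ≠ f u`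
    rw [← hfuv]
    rcases lt_or_gt_of_ne (hfib y hy hyu hyv) with h3 | h3 <;>
      rcases lt_or_gt_of_ne hyu with h1 | h1 <;> rcases lt_or_gt_of_ne hyv with h2 | h2 <;> grind
  have := card_filter_lt_eq_of_lt hu huv
  obtain ⟨r, hr⟩ := hbetween
  omega

theorem exists_lt_map_eq_of_card_image_add_one {f : V → W} {s : Finset V}
    (h : #(s.image f) + 1 = #s) :
    ∃ u ∈ s, ∃ v ∈ s, u < v ∧ f u = f v ∧ ∀ y ∈ s, y ≠ u → y ≠ v → f y ≠ f u := by
  have hfiber : ∀ u ∈ s, ∀ v ∈ s, u ≠ v → f u = f v →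
      ∀ y ∈ s, y ≠ u → y ≠ v → f y ≠ f u := by
    intro u hu v hv huv hfuv y hy hyu hyv hfy
    have := card_image_lt_of_map_eq (mem_erase.2 ⟨hyv, hy⟩) (mem_erase.2 ⟨huv, hu⟩) hyu hfy
    rw [image_erase_of_map_eq hu huv hfuv, card_erase_of_mem hv] at this
    omega
  obtain ⟨a, ha, b, hb, hab, hfab⟩ :=
    exists_ne_map_eq_of_card_image_lt (by omega : #(s.image f) < #s)
  rcases hab.lt_or_gt with hlt | hlt
  · exact ⟨a, ha, b, hb, hlt, hfab, hfiber a ha b hb hab hfab⟩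
  · exact ⟨b, hb, a, ha, hlt, hfab.symm, hfiber b hb a ha hab.symm hfab.symm⟩

section AlternatingSums

variable {R M : Type*} [Ring R] [AddCommGroup M] [Module R M] (e : Finset W → M)
  {f : V → W} {s : Finset V}

theorem sum_neg_one_pow_smul_image_erase_of_injOn (hf : Set.InjOn f s) :
    ∑ x ∈ s, (-1 : R) ^ (#{y ∈ s | y < x} + inversions f (s.erase x))
        • e ((s.erase x).image f)
      = ∑ w ∈ s.image f,
          (-1 : R) ^ (inversions f s + #{z ∈ s.image f | z < w}) • e ((s.image f).erase w) := by
  rw [sum_image hf]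
  refine sum_congr rfl fun x hx => ?_
  rw [image_erase_of_injOn hf hx, neg_one_pow_eq_pow_mod_two,
    ← inversions_erase_mod_two_of_injOn hf hx, ← neg_one_pow_eq_pow_mod_two]

theorem sum_neg_one_pow_smul_image_erase_eq_zero (hf : ¬ Set.InjOn f s)
    (he : ∀ t, #t + 1 ≠ #s → e t = 0) :
    ∑ x ∈ s, (-1 : R) ^ (#{y ∈ s | y < x} + inversions f (s.erase x))
      • e ((s.erase x).image f) = 0 := by
  have hlt : #(s.image f) < #s := card_image_le.lt_of_ne (mt card_image_iff.1 hf)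
  rcases (Nat.succ_le_of_lt hlt).eq_or_lt with heq | hlt2
  · obtain ⟨u, hu, v, hv, huv, hfuv, hfib⟩ := exists_lt_map_eq_of_card_image_add_one heq
    rw [← sum_subset (s₁ := {u, v}) (by simp [insert_subset_iff, hu, hv])]
    · rw [sum_pair huv.ne, image_erase_of_map_eq hv huv.ne' hfuv.symm,
        image_erase_of_map_eq hu huv.ne hfuv, ← add_smul, neg_one_pow_eq_pow_mod_two (R := R)
          (_ + inversions f (s.erase v)), inversions_erase_mod_two_of_collision hu hv huv hfuv hfib,
        ← neg_one_pow_eq_pow_mod_two, pow_succ, mul_neg_one, add_neg_cancel, zero_smul]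
    · intro x hx hxuv
      simp only [mem_insert, mem_singleton, not_or] at hxuv
      have := card_image_lt_of_map_eq (f := f) (mem_erase.2 ⟨Ne.symm hxuv.1, hu⟩)
        (mem_erase.2 ⟨Ne.symm hxuv.2, hv⟩) huv.ne hfuv
      rw [card_erase_of_mem hx] at this
      rw [he _ (by omega), smul_zero]
  · refine sum_eq_zero fun x _ => ?_
    have := card_le_card (image_subset_image (f := f) (erase_subset x s))
    rw [he _ (by omega), smul_zero]

end AlternatingSums

end Inversions

end Finset

namespace AbstractComplex

section Chains

variable {V W : Type*} (K : Type*) [Field K]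

open scoped Classical in
noncomputable def faceChain (Δ : AbstractComplex V) (q : ℕ) (s : Finset V) :
    Δ.Face q →₀ K :=
  if h : s ∈ Δ.faces ∧ #s = q then Finsupp.single ⟨s, h⟩ 1 else 0

variable {K} {Δ : AbstractComplex V} {Δ' : AbstractComplex W} {q : ℕ}

theorem faceChain_val (σ : Δ.Face q) : faceChain K Δ q σ.1 = Finsupp.single σ 1 := by
  rw [faceChain, dif_pos σ.2]

theorem faceChain_of_card_ne {s : Finset V} (h : #s ≠ q) : faceChain K Δ q s = 0 := by
  rw [faceChain, dif_neg fun h' => h h'.2]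

variable [LinearOrder V] [LinearOrder W]

theorem boundary_single (σ : Δ.Face (q + 1)) :
    Δ.boundary K q (Finsupp.single σ 1)
      = ∑ x ∈ σ.1, (-1 : K) ^ #{y ∈ σ.1 | y < x} • faceChain K Δ q (σ.1.erase x) := by
  simp only [boundary, Finsupp.lsum_single, LinearMap.toSpanSingleton_apply, one_smul]
  rw [← sum_attach σ.1]
  refine sum_congr rfl fun x _ => ?_
  rw [← faceChain_val]

theorem boundary_faceChain {s : Finset V} (hs : s ∈ Δ.faces) (hcard : #s = q + 1) :
    Δ.boundary K q (faceChain K Δ (q + 1) s)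
      = ∑ x ∈ s, (-1 : K) ^ #{y ∈ s | y < x} • faceChain K Δ q (s.erase x) := by
  rw [show s = (⟨s, hs, hcard⟩ : Δ.Face (q + 1)).1 from rfl, faceChain_val, boundary_single]

/- A simplex whose image has fewer vertices is sent to `0`, because `faceChain` vanishes on sets
of the wrong cardinality. -/
variable (K Δ Δ') in
noncomputable def chainMap (f : V → W) (q : ℕ) : (Δ.Face q →₀ K) →ₗ[K] (Δ'.Face q →₀ K) :=
  Finsupp.linearCombination K fun σ =>
    (-1 : K) ^ inversions f σ.1 • faceChain K Δ' q (σ.1.image f)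

theorem chainMap_single (f : V → W) (σ : Δ.Face q) :
    chainMap K Δ Δ' f q (Finsupp.single σ 1)
      = (-1 : K) ^ inversions f σ.1 • faceChain K Δ' q (σ.1.image f) := by
  rw [chainMap, Finsupp.linearCombination_single, one_smul]

theorem chainMap_faceChain (f : V → W) {s : Finset V} (hs : s ∈ Δ.faces) (hcard : #s = q) :
    chainMap K Δ Δ' f q (faceChain K Δ q s)
      = (-1 : K) ^ inversions f s • faceChain K Δ' q (s.image f) := by
  rw [show s = (⟨s, hs, hcard⟩ : Δ.Face q).1 from rfl, faceChain_val, chainMap_single]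

theorem boundary_comp_chainMap {f : V → W} (hf : ∀ σ ∈ Δ.faces, σ.image f ∈ Δ'.faces)
    (q : ℕ) :
    (Δ'.boundary K q).comp (chainMap K Δ Δ' f (q + 1))
      = (chainMap K Δ Δ' f q).comp (Δ.boundary K q) := by
  refine Finsupp.lhom_ext' fun σ => LinearMap.ext_ring ?_
  obtain ⟨hσ, hcard⟩ := σ.2
  have hboundary : chainMap K Δ Δ' f q (Δ.boundary K q (Finsupp.single σ 1))
      = ∑ x ∈ σ.1, (-1 : K) ^ (#{y ∈ σ.1 | y < x} + inversions f (σ.1.erase x))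
          • faceChain K Δ' q ((σ.1.erase x).image f) := by
    rw [boundary_single, map_sum]
    refine sum_congr rfl fun x hx => ?_
    rw [map_smul, chainMap_faceChain f (Δ.down_closed hσ (erase_subset _ _))
      (by rw [card_erase_of_mem hx, hcard, Nat.add_sub_cancel]), smul_smul, ← pow_add]
  simp only [LinearMap.comp_apply, Finsupp.lsingle_apply, chainMap_single, map_smul, hboundary]
  by_cases hinj : Set.InjOn f σ.1
  · rw [boundary_faceChain (hf _ hσ) (by rw [card_image_of_injOn hinj, hcard]), smul_sum,
      sum_neg_one_pow_smul_image_erase_of_injOn _ hinj]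
    simp only [smul_smul, ← pow_add]
  · have hlt : #(σ.1.image f) < #σ.1 := card_image_le.lt_of_ne (mt card_image_iff.1 hinj)
    rw [faceChain_of_card_ne (by omega), map_zero, smul_zero,
      sum_neg_one_pow_smul_image_erase_eq_zero _ hinj fun t ht => faceChain_of_card_ne (by omega)]

theorem chainMap_comp_chainMap_of_leftInverse {f : V → W} {g : W → V}
    (hf : ∀ σ ∈ Δ.faces, σ.image f ∈ Δ'.faces) (hmono : StrictMono f)
    (hgf : Function.LeftInverse g f) (q : ℕ) :
    (chainMap K Δ' Δ g q).comp (chainMap K Δ Δ' f q) = LinearMap.id := by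
  refine Finsupp.lhom_ext' fun σ => LinearMap.ext_ring ?_
  obtain ⟨hσ, hcard⟩ := σ.2
  have hg : MonotoneOn g (σ.1.image f : Set W) := by
    intro _ ha _ hb hab
    obtain ⟨a, -, rfl⟩ := mem_image.1 ha
    obtain ⟨b, -, rfl⟩ := mem_image.1 hb
    rw [hgf a, hgf b]
    exact hmono.le_iff_le.1 hab
  simp only [LinearMap.comp_apply, Finsupp.lsingle_apply, LinearMap.id_apply, chainMap_single,
    inversions_eq_zero_of_monotoneOn (hmono.monotone.monotoneOn _), pow_zero, one_smul]
  rw [chainMap_faceChain g (hf _ hσ) (by rw [card_image_of_injective _ hmono.injective, hcard]),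
    inversions_eq_zero_of_monotoneOn hg, pow_zero, one_smul, image_image, hgf.comp_eq_id,
    image_id, faceChain_val]

theorem RHTriv.of_retract (s : ∀ q, (Δ.Face q →₀ K) →ₗ[K] (Δ'.Face q →₀ K))
    (r : ∀ q, (Δ'.Face q →₀ K) →ₗ[K] (Δ.Face q →₀ K))
    (hs : ∀ q, (Δ'.boundary K q).comp (s (q + 1)) = (s q).comp (Δ.boundary K q))
    (hr : ∀ q, (Δ.boundary K q).comp (r (q + 1)) = (r q).comp (Δ'.boundary K q))
    (hrs : ∀ q, (r q).comp (s q) = LinearMap.id) {i : ℤ} (h : Δ'.RHTriv K i) :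
    Δ.RHTriv K i := by
  have hlift : ∀ q z w, Δ'.boundary K q w = s q z → Δ.boundary K q (r (q + 1) w) = z := by
    intro q z w hw
    rw [← LinearMap.comp_apply, hr, LinearMap.comp_apply, hw, ← LinearMap.comp_apply, hrs,
      LinearMap.id_apply]
  match i, h with
  | Int.ofNat n, h =>
    intro z hz
    have hsz : s (n + 1) z ∈ LinearMap.ker (Δ'.boundary K n) := by
      rw [LinearMap.mem_ker, ← LinearMap.comp_apply, hs, LinearMap.comp_apply,
        LinearMap.mem_ker.1 hz, map_zero]
    obtain ⟨w, hw⟩ := h hsz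
    exact ⟨r (n + 2) w, hlift _ _ _ hw⟩
  | Int.negSucc 0, h =>
    intro z _
    obtain ⟨w, hw⟩ := h (Submodule.mem_top (x := s 0 z))
    exact ⟨r 1 w, hlift _ _ _ hw⟩
  | Int.negSucc (_ + 1), _ => trivial

end Chains

theorem dimLT.map {V W : Type*} [DecidableEq W] {Δ : AbstractComplex V}
    {Δ' : AbstractComplex W} {f : V → W} (hinj : Function.Injective f)
    (hf : ∀ σ ∈ Δ.faces, σ.image f ∈ Δ'.faces) {i : ℤ} (h : Δ.dimLT i) : Δ'.dimLT i := by
  obtain ⟨s, hs, hcard⟩ := h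
  exact ⟨s.image f, hf s hs, by rwa [card_image_of_injective _ hinj]⟩

theorem exists_isFacet_superset {V : Type*} [Finite V] {Δ : AbstractComplex V} {s : Finset V}
    (hs : s ∈ Δ.faces) : ∃ F, Δ.IsFacet F ∧ s ⊆ F := by
  obtain ⟨F, hsF, hF⟩ := (Set.toFinite Δ.faces).exists_le_maximal hs
  exact ⟨F, ⟨hF.prop, fun t ht hFt => hFt.antisymm (hF.2 ht hFt)⟩, hsF⟩

section Contraction

variable {V : Type*} {Δ : AbstractComplex V}

local notation "mk" => Quotient.mk Δ.contractSetoid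

theorem mem_faces_of_mk_mem {τ : Finset (Quotient Δ.contractSetoid)}
    (hτ : τ ∈ Δ.contraction.faces) {s : Finset V} (hs : ∀ x ∈ s, mk x ∈ τ) :
    s ∈ Δ.faces := by
  obtain ⟨F, hF, hrep⟩ := hτ
  refine Δ.down_closed hF.1 fun x hx => ?_
  obtain ⟨y, hy, hyx⟩ := hrep _ (hs x hx)
  exact (Quotient.exact hyx F hF).1 hy

theorem image_mk_mem_contraction_faces [Finite V] [DecidableEq (Quotient Δ.contractSetoid)]
    {s : Finset V} (hs : s ∈ Δ.faces) : s.image mk ∈ Δ.contraction.faces := by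
  obtain ⟨F, hF, hsF⟩ := exists_isFacet_superset hs
  refine ⟨F, hF, fun y hy => ?_⟩
  obtain ⟨x, hx, rfl⟩ := mem_image.1 hy
  exact ⟨x, hsF hx, rfl⟩

variable [LinearOrder V] {Gbar : Finset (Quotient Δ.contractSetoid)} {G : Finset V}

theorem image_out_mem_link_faces (hG : ∀ x, x ∈ G ↔ mk x ∈ Gbar)
    {σ : Finset (Quotient Δ.contractSetoid)} (hσ : σ ∈ (Δ.contraction.link Gbar).faces) :
    σ.image Quotient.out ∈ (Δ.link G).faces := by
  obtain ⟨hdisj, hface⟩ := hσ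
  rw [← disjoint_iff_inter_eq_empty] at hdisj
  refine ⟨disjoint_iff_inter_eq_empty.1 <| disjoint_left.2 fun x hx hxG => ?_,
    mem_faces_of_mk_mem hface fun x hx => ?_⟩
  · obtain ⟨a, ha, rfl⟩ := mem_image.1 hx
    rw [hG, Quotient.out_eq] at hxG
    exact disjoint_left.1 hdisj ha hxG
  · rcases mem_union.1 hx with hx | hx
    · obtain ⟨a, ha, rfl⟩ := mem_image.1 hx
      rw [Quotient.out_eq]
      exact mem_union_left _ ha
    · exact mem_union_right _ ((hG x).1 hx)

theorem image_mk_mem_link_faces [Finite V] (hG : ∀ x, x ∈ G ↔ mk x ∈ Gbar) {σ : Finset V}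
    (hσ : σ ∈ (Δ.link G).faces) : σ.image mk ∈ (Δ.contraction.link Gbar).faces := by
  obtain ⟨hdisj, hface⟩ := hσ
  rw [← disjoint_iff_inter_eq_empty] at hdisj
  have hGbar : G.image mk = Gbar := by
    ext y
    refine ⟨fun hy => ?_,
      fun hy => mem_image.2 ⟨y.out, by rwa [hG, Quotient.out_eq], y.out_eq⟩⟩
    obtain ⟨x, hx, rfl⟩ := mem_image.1 hy
    exact (hG x).1 hx
  refine ⟨disjoint_iff_inter_eq_empty.1 <| disjoint_left.2 fun y hy hyG => ?_, ?_⟩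
  · obtain ⟨x, hx, rfl⟩ := mem_image.1 hy
    exact disjoint_left.1 hdisj hx ((hG x).2 hyG)
  · rw [← hGbar, ← image_union]
    exact image_mk_mem_contraction_faces hface

end Contraction

end AbstractComplex

/-- if `Δ` is Buchsbaum and its contraction `Γ` is pure,
then `Γ` is Buchsbaum. -/
theorem contraction_buchsbaum (K : Type*) [Field K] {V : Type*} [Fintype V]
    [LinearOrder V] (Δ : AbstractComplex V) (hΔ : AbstractComplex.IsBuchsbaum K Δ)
    (hpure : Δ.contraction.IsPure) :
    AbstractComplex.IsBuchsbaum K Δ.contraction := by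
  open AbstractComplex in
  refine ⟨hpure, fun Gbar hGbar hGbarne i hdim => ?_⟩
  set G : Finset V := {x | Quotient.mk Δ.contractSetoid x ∈ Gbar}
  have hG : ∀ x, x ∈ G ↔ Quotient.mk _ x ∈ Gbar := by simp [G]
  have hout : ∀ σ ∈ (Δ.contraction.link Gbar).faces, σ.image Quotient.out ∈ (Δ.link G).faces :=
    fun _ => image_out_mem_link_faces hG
  have hmk : ∀ σ ∈ (Δ.link G).faces, σ.image (Quotient.mk _) ∈ (Δ.contraction.link Gbar).faces :=
    fun _ => image_mk_mem_link_faces hG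
  -- `Quotient.out` is strictly monotone since `quotLinearOrder` is pulled back along it
  refine RHTriv.of_retract (chainMap K _ _ Quotient.out) (chainMap K _ _ (Quotient.mk _))
    (boundary_comp_chainMap hout) (boundary_comp_chainMap hmk)
    (chainMap_comp_chainMap_of_leftInverse hout (fun _ _ h => h) Quotient.out_eq) ?_
  obtain ⟨y, hy⟩ := nonempty_iff_ne_empty.2 hGbarne
  exact hΔ.2 G (mem_faces_of_mk_mem hGbar fun x => (hG x).1)
    (nonempty_iff_ne_empty.1 ⟨y.out, by rwa [hG, Quotient.out_eq]⟩) i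
    (hdim.map Quotient.out_injective hout)
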